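/- Let Ω = ℝ^d/ℤ^d, let h : Ω → ℝ be L-Lipschitz with ĥ(ξ) ≠ 0 for all ξ, let 𝓜_N be a nonempty set of Borel probability measures on Ω, and for n ≥ 2^d set ε = (√d/2 + 1)·L/(n^{1/d} − 1) and 𝓐_n^ε = 𝓜(Ω^n) ∩ 𝓜_N^ε, where 𝓜_N^ε = ∪_{μ_N∈𝓜_N} { μ ∈ M_Δ : N_h(μ − μ_N) ≤ ε } is the ε-enlargement of 𝓜_N in the N_h-norm. Then 𝓐_n^ε is nonempty and the Hausdorff distance satisfies 𝓗_{N_h}(𝓐_n^ε, 𝓜_N) ≤ ε, i.e. 𝓗_{N_h}(𝓐_n^ε, 𝓜_N) = O(L·n^{−1/d}). -/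

import Mathlib

open MeasureTheory Filter Topology
open scoped NNReal ENNReal

noncomputable section

/-- The `d`-dimensional torus `Ω = ℝ^d/ℤ^d`. -/
abbrev Torus (d : ℕ) : Type := Fin d → AddCircle (1 : ℝ)

/-- Convolution `(h ⋆ μ)(x) = ∫ h(x−y) dμ(y)` of a function with a finite signed
measure, via the Jordan decomposition of `μ`. -/
def convSigned {d : ℕ} (h : Torus d → ℝ) (μ : SignedMeasure (Torus d)) (x : Torus d) : ℝ :=
  ∫ y, h (x - y) ∂μ.toJordanDecomposition.posPart -
    ∫ y, h (x - y) ∂μ.toJordanDecomposition.negPart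

/-- `N_h(μ) = ‖h ⋆ μ‖_{L²(Ω)}` for a signed measure `μ`. -/
def nhSigned {d : ℕ} (h : Torus d → ℝ) (μ : SignedMeasure (Torus d)) : ℝ :=
  Real.sqrt (∫ x, (convSigned h μ x) ^ 2)

/-- The total variation norm `‖μ‖_TV` of a signed measure. -/
def tvNorm {d : ℕ} (μ : SignedMeasure (Torus d)) : ℝ := (μ.totalVariation Set.univ).toReal

/-- The integral `∫ f dμ` of a function against a signed measure. -/
def signedIntegral {d : ℕ} (μ : SignedMeasure (Torus d)) (f : Torus d → ℝ) : ℝ :=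
  ∫ y, f y ∂μ.toJordanDecomposition.posPart - ∫ y, f y ∂μ.toJordanDecomposition.negPart

/-- The Fourier coefficient `ĥ(ξ) = ∫_Ω e^{−2πi⟨ξ,x⟩} h(x) dx`, `ξ ∈ ℤ^d`. -/
def torusFourierCoeff {d : ℕ} (h : Torus d → ℝ) (ξ : Fin d → ℤ) : ℂ :=
  ∫ x : Torus d, (∏ i, fourier (-(ξ i)) (x i)) * (h x : ℂ)

/-- `(h ⋆ (μ − ν))(x)` for two (finite) measures `μ, ν`. -/
def convDiff {d : ℕ} (h : Torus d → ℝ) (μ ν : Measure (Torus d)) (x : Torus d) : ℝ :=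
  ∫ y, h (x - y) ∂μ - ∫ y, h (x - y) ∂ν

/-- `N_h(μ − ν) = ‖h ⋆ (μ − ν)‖_{L²(Ω)}`. -/
def nhDist {d : ℕ} (h : Torus d → ℝ) (μ ν : Measure (Torus d)) : ℝ :=
  Real.sqrt (∫ x, (convDiff h μ ν x) ^ 2)

/-- The L¹ Wasserstein (Kantorovich) distance: infimum of `∫ dist(x,y) dc` over
all couplings `c` of `μ` and `ν`. -/
def W1 {d : ℕ} (μ ν : Measure (Torus d)) : ℝ :=
  sInf { r | ∃ c : Measure (Torus d × Torus d),
    c.map Prod.fst = μ ∧ c.map Prod.snd = ν ∧ r = ∫ p, dist p.1 p.2 ∂c }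

/-- The set `𝓜(Ω^N)` of `N`-point measures `(1/N) ∑ δ_{p_i}`. -/
def nPointMeasures (d N : ℕ) : Set (Measure (Torus d)) :=
  { μ | ∃ p : Fin N → Torus d, μ = (N : ℝ≥0∞)⁻¹ • ∑ i, Measure.dirac (p i) }

/-- Hausdorff distance between two sets of measures with respect to the metric
`(μ, ν) ↦ N_h(μ − ν)`. -/
def hausNh {d : ℕ} (h : Torus d → ℝ) (A B : Set (Measure (Torus d))) : ℝ :=
  max (sSup ((fun μ => sInf ((fun ν => nhDist h μ ν) '' B)) '' A))
      (sSup ((fun ν => sInf ((fun μ => nhDist h μ ν) '' A)) '' B))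

/-!
Cut the torus into the `m ^ d` cubes of side `1/m`, `m = ⌊n^{1/d}⌋`, and number them in base `m`.
On the torus, consecutive cubes in this order are adjacent: their centres are `1/m` apart in the
sup metric. Moving the mass of `ν` to the centres costs at most `L/(2m)` against an `L`-Lipschitz
test function. The `n`-point measure `μ` puts `⌊n F(t+1)⌋ - ⌊n F(t)⌋` points at the `t`-th centre,
`F(t)` being the `ν`-mass of the first `t` cubes; its cumulative counts stay within `1/n` of `F`,
so summation by parts against the test function, which moves by at most `L/m` from one centre to
the next, costs at most `(m^d/n) (L/m) ≤ L/m`. Taking the test functions `y ↦ h (x - y)` bounds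
`h ⋆ (μ - ν)` uniformly, hence `N_h(μ - ν) ≤ 3L/(2m) ≤ ε`. Doing this for every `μ_N ∈ 𝓜_N` gives
both the nonemptiness and the Hausdorff bound.
-/

open Finset

instance : IsProbabilityMeasure (volume : Measure (AddCircle (1 : ℝ))) :=
  ⟨by rw [AddCircle.measure_univ]; norm_num⟩

lemma AddCircle.dist_coe_le_abs_sub {p : ℝ} (u v : ℝ) :
    dist (u : AddCircle p) (v : AddCircle p) ≤ |u - v| := by
  rw [dist_eq_norm, ← AddCircle.coe_sub]
  exact QuotientAddGroup.norm_mk_le_norm.trans_eq (Real.norm_eq_abs _)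

lemma AddCircle.coe_natCast_add_div_eq_mod (a : ℝ) (k m : ℕ) :
    ((((k : ℝ) + a) / m : ℝ) : AddCircle (1 : ℝ)) = ((((k % m : ℕ) : ℝ) + a) / m : ℝ) := by
  rcases Nat.eq_zero_or_pos m with rfl | hm
  · simp
  set q := k / m
  have hsplit : ((k : ℝ) + a) / m = (((k % m : ℕ) : ℝ) + a) / m + (q : ℝ) := by
    have hk : (k : ℝ) = (k % m : ℕ) + m * q := by exact_mod_cast (Nat.mod_add_div k m).symm
    rw [hk]
    field_simp
    ring
  have hq : ((q : ℝ) : AddCircle (1 : ℝ)) = 0 := (AddCircle.coe_eq_zero_iff 1).2 ⟨q, by simp⟩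
  rw [hsplit, AddCircle.coe_add, hq, add_zero]

def circleRep (y : AddCircle (1 : ℝ)) : ℝ := AddCircle.measurableEquivIco 1 0 y

lemma circleRep_mem_Ico (y : AddCircle (1 : ℝ)) : circleRep y ∈ Set.Ico (0 : ℝ) 1 := by
  simpa [circleRep] using (AddCircle.measurableEquivIco (1 : ℝ) 0 y).2

lemma coe_circleRep (y : AddCircle (1 : ℝ)) : ((circleRep y : ℝ) : AddCircle (1 : ℝ)) = y :=
  (AddCircle.equivIco (1 : ℝ) 0).symm_apply_apply y

lemma measurable_circleRep : Measurable circleRep :=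
  measurable_subtype_coe.comp (AddCircle.measurableEquivIco (1 : ℝ) 0).measurable

def circleDigit (m : ℕ) (y : AddCircle (1 : ℝ)) : ℕ := ⌊(m : ℝ) * circleRep y⌋₊

lemma circleDigit_lt {m : ℕ} (hm : 0 < m) (y : AddCircle (1 : ℝ)) : circleDigit m y < m := by
  have hm' : (0 : ℝ) < m := Nat.cast_pos.2 hm
  obtain ⟨h0, h1⟩ := circleRep_mem_Ico y
  exact (Nat.floor_lt (by positivity)).2 (by nlinarith)

lemma measurable_circleDigit (m : ℕ) : Measurable (circleDigit m) :=
  (measurable_circleRep.const_mul _).nat_floor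

lemma dist_circleDigit_le {m : ℕ} (hm : 0 < m) (y : AddCircle (1 : ℝ)) :
    dist y ((((circleDigit m y : ℝ) + 2⁻¹) / m : ℝ) : AddCircle (1 : ℝ)) ≤ 1 / (2 * m) := by
  have hm' : (0 : ℝ) < m := Nat.cast_pos.2 hm
  have hlow : (circleDigit m y : ℝ) ≤ m * circleRep y :=
    Nat.floor_le (mul_nonneg hm'.le (circleRep_mem_Ico y).1)
  have hupp : (m : ℝ) * circleRep y < circleDigit m y + 1 := Nat.lt_floor_add_one _
  have hx : |m * circleRep y - circleDigit m y - 2⁻¹| ≤ 2⁻¹ :=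
    abs_le.2 ⟨by linarith, by linarith⟩
  calc dist y _
      = dist ((circleRep y : ℝ) : AddCircle (1 : ℝ))
          ((((circleDigit m y : ℝ) + 2⁻¹) / m : ℝ) : AddCircle (1 : ℝ)) := by
        rw [coe_circleRep]
    _ ≤ |circleRep y - ((circleDigit m y : ℝ) + 2⁻¹) / m| := AddCircle.dist_coe_le_abs_sub _ _
    _ = |m * circleRep y - circleDigit m y - 2⁻¹| / m := by
        rw [← Nat.abs_cast m, ← abs_div, Nat.abs_cast]
        congr 1
        field_simp
        ring
    _ ≤ 2⁻¹ / m := div_le_div_of_nonneg_right hx hm'.le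
    _ = 1 / (2 * m) := by ring

section Grid

variable {d : ℕ}

def gridCell (m : ℕ) (y : Torus d) : ℕ := ∑ i : Fin d, circleDigit m (y i) * m ^ (i : ℕ)

/-- The digits of `t` are not reduced mod `m`: on the torus this changes nothing, and it makes
the centres of consecutive cells adjacent even across a carry. -/
def gridCenter (m t : ℕ) : Torus d :=
  fun i => (((((t / m ^ (i : ℕ) : ℕ) : ℝ) + 2⁻¹) / m : ℝ) : AddCircle (1 : ℝ))

lemma gridCell_eq_finFunctionFinEquiv {m : ℕ} (hm : 0 < m) (y : Torus d) :
    gridCell m y =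
      finFunctionFinEquiv (fun i => (⟨circleDigit m (y i), circleDigit_lt hm _⟩ : Fin m)) := by
  simp [gridCell]

lemma gridCell_lt {m : ℕ} (hm : 0 < m) (y : Torus d) : gridCell m y < m ^ d := by
  rw [gridCell_eq_finFunctionFinEquiv hm]
  exact Fin.is_lt _

lemma gridCell_div_pow_mod {m : ℕ} (hm : 0 < m) (y : Torus d) (i : Fin d) :
    gridCell m y / m ^ (i : ℕ) % m = circleDigit m (y i) := by
  rw [gridCell_eq_finFunctionFinEquiv hm, ← finFunctionFinEquiv_symm_apply_val,
    Equiv.symm_apply_apply]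

lemma measurable_gridCell (m : ℕ) : Measurable (gridCell (d := d) m) :=
  Finset.measurable_sum _ fun i _ =>
    ((measurable_circleDigit m).comp (measurable_pi_apply i)).mul_const _

lemma dist_gridCenter_gridCell_le {m : ℕ} (hm : 0 < m) (y : Torus d) :
    dist y (gridCenter m (gridCell m y)) ≤ 1 / (2 * m) := by
  refine (dist_pi_le_iff (by positivity)).2 fun i => ?_
  simp only [gridCenter]
  rw [AddCircle.coe_natCast_add_div_eq_mod, gridCell_div_pow_mod hm]
  exact dist_circleDigit_le hm (y i)

lemma dist_gridCenter_succ_le (m t : ℕ) :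
    dist (gridCenter (d := d) m t) (gridCenter m (t + 1)) ≤ 1 / m := by
  refine (dist_pi_le_iff (by positivity)).2 fun i => ?_
  refine (AddCircle.dist_coe_le_abs_sub _ _).trans ?_
  rw [← sub_div, abs_div, Nat.abs_cast, add_sub_add_right_eq_sub]
  refine div_le_div_of_nonneg_right ?_ (Nat.cast_nonneg m)
  rw [Nat.succ_div]
  split_ifs <;> simp

end Grid

lemma Finset.sum_range_sub_mul_eq {R : Type*} [CommRing R] (S g : ℕ → R) (M : ℕ) :
    ∑ t ∈ range M, (S (t + 1) - S t) * g t
      = S M * g M - S 0 * g 0 - ∑ t ∈ range M, S (t + 1) * (g (t + 1) - g t) := by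
  induction M with
  | zero => simp
  | succ M ih => rw [sum_range_succ, sum_range_succ, ih]; ring

lemma Finset.abs_sum_range_sub_mul_le {S g : ℕ → ℝ} {M : ℕ} {ε K : ℝ} (hS0 : S 0 = 0)
    (hSM : S M = 0) (hS : ∀ t, |S t| ≤ ε) (hg : ∀ t, |g (t + 1) - g t| ≤ K) :
    |∑ t ∈ range M, (S (t + 1) - S t) * g t| ≤ M * (ε * K) := by
  rw [sum_range_sub_mul_eq, hS0, hSM, zero_mul, zero_mul, sub_zero, zero_sub, abs_neg]
  calc |∑ t ∈ range M, S (t + 1) * (g (t + 1) - g t)|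
      ≤ ∑ t ∈ range M, |S (t + 1) * (g (t + 1) - g t)| := abs_sum_le_sum_abs _ _
    _ ≤ ∑ _t ∈ range M, ε * K := sum_le_sum fun t _ => by
        rw [abs_mul]
        exact mul_le_mul (hS _) (hg t) (abs_nonneg _) ((abs_nonneg _).trans (hS 0))
    _ = M * (ε * K) := by rw [sum_const, card_range, nsmul_eq_mul]

/-- The cumulative sums of `w`, not the weights themselves, are rounded down to multiples of
`1/n`, so that every partial sum of `w t - k t / n` stays within `1/n` and summation by parts
keeps the errors from accumulating. -/
theorem exists_counts_abs_sum_sub_le {M n : ℕ} (hn : 0 < n) {w : ℕ → ℝ} (hw : ∀ t, 0 ≤ w t)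
    (hw1 : ∑ t ∈ range M, w t = 1) :
    ∃ k : ℕ → ℕ, ∑ t ∈ range M, k t = n ∧ ∀ (K : ℝ) (g : ℕ → ℝ),
      (∀ t, |g (t + 1) - g t| ≤ K) → |∑ t ∈ range M, (w t - k t / n) * g t| ≤ M / n * K := by
  have hn' : (0 : ℝ) < n := Nat.cast_pos.2 hn
  set F : ℕ → ℝ := fun s => ∑ t ∈ range s, w t
  have hF_nonneg : ∀ s, 0 ≤ F s := fun s => sum_nonneg fun t _ => hw t
  have hF_mono : Monotone F := monotone_nat_of_le_succ fun s => by
    simp only [F, sum_range_succ, le_add_iff_nonneg_right, hw]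
  set G : ℕ → ℕ := fun s => ⌊(n : ℝ) * F s⌋₊
  have hG_mono : Monotone G := fun s s' hss' =>
    Nat.floor_mono (mul_le_mul_of_nonneg_left (hF_mono hss') hn'.le)
  have hG0 : G 0 = 0 := by simp [G, F]
  have hGM : G M = n := by simp [G, F, hw1]
  refine ⟨fun t => G (t + 1) - G t, by rw [sum_range_tsub hG_mono, hGM, hG0, Nat.sub_zero],
    fun K g hg => ?_⟩
  set S : ℕ → ℝ := fun s => F s - G s / n
  have hS : ∀ s, |S s| ≤ 1 / n := fun s => by
    have hlow : (G s : ℝ) ≤ n * F s := Nat.floor_le (mul_nonneg hn'.le (hF_nonneg s))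
    have hupp : (n : ℝ) * F s - 1 < G s := Nat.sub_one_lt_floor _
    have e : S s = (n * F s - G s) / n := by simp only [S]; field_simp
    rw [e, abs_div, abs_of_pos hn']
    exact div_le_div_of_nonneg_right (abs_le.2 ⟨by linarith, by linarith⟩) hn'.le
  have hterm : ∀ t, w t - ((G (t + 1) - G t : ℕ) : ℝ) / n = S (t + 1) - S t := fun t => by
    simp only [S, F, sum_range_succ, Nat.cast_sub (hG_mono (Nat.le_succ t))]
    ring
  simp_rw [hterm]
  exact (abs_sum_range_sub_mul_le (M := M) (by simp [S, hG0, F])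
    (by simp [S, hGM, F, hw1, hn'.ne']) hS hg).trans_eq (by ring)

lemma exists_fin_sum_eq_sum_nsmul {A : Type*} [AddCommMonoid A] (k : ℕ → ℕ) {M n : ℕ}
    (hkn : ∑ t ∈ range M, k t = n) :
    ∃ p : Fin n → ℕ, ∀ v : ℕ → A, ∑ i, v (p i) = ∑ t ∈ range M, k t • v t := by
  subst hkn
  induction M with
  | zero =>
    rw [sum_range_zero]
    exact ⟨Fin.elim0, fun v => by simp⟩
  | succ M ih =>
    obtain ⟨p, hp⟩ := ih
    rw [sum_range_succ]
    refine ⟨Fin.append p fun _ => M, fun v => ?_⟩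
    simp [Fin.sum_univ_add, hp, sum_range_succ]

lemma MeasureTheory.integral_comp_eq_sum_measureReal {X : Type*} [MeasurableSpace X]
    {ν : Measure X} [IsFiniteMeasure ν] {q : X → ℕ} (hq : Measurable q) {M : ℕ}
    (hqM : ∀ y, q y < M) (f : ℕ → ℝ) :
    ∫ y, f (q y) ∂ν = ∑ t ∈ range M, ν.real (q ⁻¹' {t}) * f t := by
  have hmeas : ∀ t : ℕ, MeasurableSet (q ⁻¹' {t}) := fun t => hq (measurableSet_singleton t)
  have hsplit : (fun y => f (q y))
      = fun y => ∑ t ∈ range M, (q ⁻¹' {t}).indicator (fun _ => f t) y := by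
    funext y
    simp only [Set.indicator, Set.mem_preimage, Set.mem_singleton_iff]
    rw [sum_ite_eq, if_pos (mem_range.2 (hqM y))]
  rw [hsplit, integral_finsetSum _ fun t _ =>
    (integrable_indicator_iff (hmeas t)).2 integrableOn_const]
  exact sum_congr rfl fun t _ => by rw [integral_indicator_const _ (hmeas t), smul_eq_mul]

lemma isProbabilityMeasure_of_mem_nPointMeasures {d n : ℕ} (hn : n ≠ 0) {μ : Measure (Torus d)}
    (hμ : μ ∈ nPointMeasures d n) : IsProbabilityMeasure μ := by
  obtain ⟨p, rfl⟩ := hμ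
  constructor
  simp [ENNReal.inv_mul_cancel (Nat.cast_ne_zero.2 hn) (ENNReal.natCast_ne_top n)]

lemma MeasureTheory.integral_inv_smul_sum_dirac {X : Type*} [MeasurableSpace X]
    [MeasurableSingletonClass X] {n : ℕ} (p : Fin n → X) (g : X → ℝ) :
    ∫ y, g y ∂((n : ℝ≥0∞)⁻¹ • ∑ i, Measure.dirac (p i)) = (n : ℝ)⁻¹ * ∑ i, g (p i) := by
  rw [integral_smul_measure, integral_finsetSum_measure fun i _ => integrable_dirac enorm_lt_top]
  simp [integral_dirac]

lemma abs_integral_comp_gridCenter_gridCell_sub_le {d m : ℕ} (hm : 0 < m)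
    (ν : Measure (Torus d)) [IsProbabilityMeasure ν] {K : ℝ≥0} {g : Torus d → ℝ}
    (hg : LipschitzWith K g) :
    |∫ y, g (gridCenter m (gridCell m y)) ∂ν - ∫ y, g y ∂ν| ≤ K / (2 * m) := by
  obtain ⟨C, hC⟩ := isCompact_univ.exists_bound_of_continuousOn hg.continuous.continuousOn
  have hint : ∀ {f : Torus d → Torus d}, Measurable f → Integrable (fun y => g (f y)) ν :=
    fun hf => Integrable.of_bound (hg.continuous.measurable.comp hf).aestronglyMeasurable C
      (ae_of_all _ fun y => hC _ (Set.mem_univ _))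
  have hpt : ∀ y, ‖g (gridCenter m (gridCell m y)) - g y‖ ≤ K / (2 * m) := fun y => by
    rw [Real.norm_eq_abs, ← Real.dist_eq, dist_comm]
    exact (hg.dist_le_mul_of_le (dist_gridCenter_gridCell_le hm y)).trans_eq (by ring)
  rw [← integral_sub (hint (f := fun y => gridCenter m (gridCell m y))
    ((measurable_from_nat (f := gridCenter m)).comp (measurable_gridCell m)))
    (hint (f := fun y => y) measurable_id)]
  simpa using norm_integral_le_of_norm_le_const (μ := ν) (ae_of_all _ hpt)

theorem exists_nPointMeasure_abs_integral_sub_le {d m n : ℕ} (hm : 0 < m) (hmn : m ^ d ≤ n)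
    (ν : Measure (Torus d)) [IsProbabilityMeasure ν] :
    ∃ μ ∈ nPointMeasures d n, ∀ (K : ℝ≥0) (g : Torus d → ℝ), LipschitzWith K g →
      |∫ y, g y ∂μ - ∫ y, g y ∂ν| ≤ 3 * K / (2 * m) := by
  have hn : 0 < n := (Nat.pow_pos hm).trans_le hmn
  set c : ℕ → Torus d := gridCenter m
  set w : ℕ → ℝ := fun t => ν.real (gridCell m ⁻¹' {t})
  have hcell : ∀ f : ℕ → ℝ, ∫ y, f (gridCell m y) ∂ν = ∑ t ∈ range (m ^ d), w t * f t :=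
    integral_comp_eq_sum_measureReal (measurable_gridCell m) (gridCell_lt hm)
  have hw1 : ∑ t ∈ range (m ^ d), w t = 1 := by simpa using (hcell fun _ => 1).symm
  obtain ⟨k, hkn, hk⟩ := exists_counts_abs_sum_sub_le hn (fun t => measureReal_nonneg) hw1
  obtain ⟨p, hp⟩ := exists_fin_sum_eq_sum_nsmul (A := ℝ) k hkn
  refine ⟨(n : ℝ≥0∞)⁻¹ • ∑ i, Measure.dirac (c (p i)), ⟨_, rfl⟩, fun K g hg => ?_⟩
  have hμ : ∫ y, g y ∂((n : ℝ≥0∞)⁻¹ • ∑ i, Measure.dirac (c (p i)))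
      = ∑ t ∈ range (m ^ d), k t / n * g (c t) := by
    rw [integral_inv_smul_sum_dirac, hp fun t => g (c t), mul_sum]
    exact sum_congr rfl fun t _ => by rw [nsmul_eq_mul]; ring
  have hround : |∑ t ∈ range (m ^ d), (w t - k t / n) * g (c t)| ≤ K / m := by
    refine (hk (K / m) (fun t => g (c t)) fun t => ?_).trans ?_
    · rw [← Real.dist_eq, dist_comm]
      exact (hg.dist_le_mul_of_le (dist_gridCenter_succ_le m t)).trans_eq (by ring)
    · exact mul_le_of_le_one_left (by positivity)
        ((div_le_one (Nat.cast_pos.2 hn)).2 (Nat.cast_le.2 hmn))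
  have hsplit : ∫ y, g y ∂((n : ℝ≥0∞)⁻¹ • ∑ i, Measure.dirac (c (p i))) - ∫ y, g y ∂ν
      = -∑ t ∈ range (m ^ d), (w t - k t / n) * g (c t)
        + (∫ y, g (c (gridCell m y)) ∂ν - ∫ y, g y ∂ν) := by
    rw [hμ, hcell fun t => g (c t)]
    simp only [sub_mul, sum_sub_distrib]
    ring
  rw [hsplit]
  calc _ ≤ |∑ t ∈ range (m ^ d), (w t - k t / n) * g (c t)|
        + |∫ y, g (c (gridCell m y)) ∂ν - ∫ y, g y ∂ν| :=
        (abs_add_le _ _).trans_eq (by rw [abs_neg])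
    _ ≤ K / m + K / (2 * m) :=
        add_le_add hround (abs_integral_comp_gridCenter_gridCell_sub_le hm ν hg)
    _ = 3 * K / (2 * m) := by field_simp; ring

lemma nhDist_le_of_forall_abs_convDiff_le {d : ℕ} {h : Torus d → ℝ} {μ ν : Measure (Torus d)}
    {B : ℝ} (hB : ∀ x, |convDiff h μ ν x| ≤ B) : nhDist h μ ν ≤ B := by
  have hB0 : 0 ≤ B := (abs_nonneg _).trans (hB 0)
  have hsq : ∫ x, convDiff h μ ν x ^ 2 ≤ B ^ 2 := by
    simpa using integral_mono_of_nonneg (μ := volume) (ae_of_all _ fun x => sq_nonneg _)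
      (integrable_const (B ^ 2))
      (ae_of_all _ fun x => sq_le_sq.2 ((hB x).trans (le_abs_self B)))
  calc nhDist h μ ν ≤ Real.sqrt (B ^ 2) := Real.sqrt_le_sqrt hsq
    _ = B := Real.sqrt_sq hB0

theorem exists_nPointMeasure_nhDist_le {d m n : ℕ} (hm : 0 < m) (hmn : m ^ d ≤ n) {L : ℝ≥0}
    {h : Torus d → ℝ} (hLip : LipschitzWith L h) (ν : Measure (Torus d))
    [IsProbabilityMeasure ν] :
    ∃ μ ∈ nPointMeasures d n, nhDist h μ ν ≤ 3 * L / (2 * m) := by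
  obtain ⟨μ, hμ, hclose⟩ := exists_nPointMeasure_abs_integral_sub_le hm hmn ν
  refine ⟨μ, hμ, nhDist_le_of_forall_abs_convDiff_le fun x => ?_⟩
  exact hclose L (fun y => h (x - y))
    (by simpa [Function.comp_def] using hLip.comp (IsometryEquiv.subLeft x).isometry.lipschitz)

lemma convDiff_torus_zero_eq_zero (h : Torus 0 → ℝ) (μ ν : Measure (Torus 0))
    [IsProbabilityMeasure μ] [IsProbabilityMeasure ν] (x : Torus 0) : convDiff h μ ν x = 0 := by
  have hconst : (fun y : Torus 0 => h (x - y)) = fun _ => h 0 :=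
    funext fun y => congrArg h (Subsingleton.elim _ _)
  rw [convDiff, hconst]
  simp

lemma two_le_rpow_one_div_of_two_pow_le {d n : ℕ} (hd : d ≠ 0) (hn : 2 ^ d ≤ n) :
    2 ≤ (n : ℝ) ^ ((1 : ℝ) / d) := by
  rw [one_div, ← Real.pow_rpow_inv_natCast (by norm_num : (0 : ℝ) ≤ 2) hd]
  exact Real.rpow_le_rpow (by positivity) (by exact_mod_cast hn) (by positivity)

lemma floor_rpow_one_div_pow_le {d : ℕ} (hd : d ≠ 0) (n : ℕ) :
    ⌊(n : ℝ) ^ ((1 : ℝ) / d)⌋₊ ^ d ≤ n := by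
  have h := pow_le_pow_left₀ (Nat.cast_nonneg _)
    (Nat.floor_le (by positivity : 0 ≤ (n : ℝ) ^ ((1 : ℝ) / d))) d
  rw [one_div] at h ⊢
  rw [Real.rpow_inv_natCast_pow (Nat.cast_nonneg n) hd] at h
  exact_mod_cast h

theorem exists_nPointMeasure_nhDist_le_of_two_pow_le {d n : ℕ} (hn : 2 ^ d ≤ n) {L : ℝ≥0}
    {h : Torus d → ℝ} (hLip : LipschitzWith L h) (ν : Measure (Torus d))
    [IsProbabilityMeasure ν] :
    ∃ μ ∈ nPointMeasures d n, IsProbabilityMeasure μ ∧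
      nhDist h μ ν ≤ (Real.sqrt d / 2 + 1) * (L : ℝ) / ((n : ℝ) ^ ((1 : ℝ) / d) - 1) := by
  have hn0 : n ≠ 0 := ((Nat.two_pow_pos d).trans_le hn).ne'
  suffices ∃ μ ∈ nPointMeasures d n,
      nhDist h μ ν ≤ (Real.sqrt d / 2 + 1) * (L : ℝ) / ((n : ℝ) ^ ((1 : ℝ) / d) - 1) by
    obtain ⟨μ, hμ, hle⟩ := this
    exact ⟨μ, hμ, isProbabilityMeasure_of_mem_nPointMeasures hn0 hμ, hle⟩
  rcases Nat.eq_zero_or_pos d with rfl | hd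
  · have hμ : (n : ℝ≥0∞)⁻¹ • ∑ _i : Fin n, Measure.dirac 0 ∈ nPointMeasures 0 n := ⟨_, rfl⟩
    have := isProbabilityMeasure_of_mem_nPointMeasures hn0 hμ
    refine ⟨_, hμ, (nhDist_le_of_forall_abs_convDiff_le (B := 0) fun x => ?_).trans_eq (by simp)⟩
    rw [convDiff_torus_zero_eq_zero, abs_zero]
  set x := (n : ℝ) ^ ((1 : ℝ) / d)
  have hx : 2 ≤ x := two_le_rpow_one_div_of_two_pow_le hd.ne' hn
  have hm : 2 ≤ ⌊x⌋₊ := Nat.le_floor (by exact_mod_cast hx)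
  obtain ⟨μ, hμ, hle⟩ := exists_nPointMeasure_nhDist_le (by omega : 0 < ⌊x⌋₊)
    (floor_rpow_one_div_pow_le hd.ne' n) hLip ν
  refine ⟨μ, hμ, hle.trans ?_⟩
  have hxm : x - 1 < ⌊x⌋₊ := Nat.sub_one_lt_floor x
  have hsd : 1 ≤ Real.sqrt d := Real.one_le_sqrt.2 (by exact_mod_cast hd)
  calc 3 * (L : ℝ) / (2 * ⌊x⌋₊) = 3 / 2 * (L / ⌊x⌋₊) := by ring
    _ ≤ (Real.sqrt d / 2 + 1) * (L / (x - 1)) :=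
        mul_le_mul (by linarith) (div_le_div_of_nonneg_left L.2 (by linarith) hxm.le)
          (by positivity) (by positivity)
    _ = (Real.sqrt d / 2 + 1) * L / (x - 1) := (mul_div_assoc _ _ _).symm

lemma hausNh_le_of_forall_exists_nhDist_le {d : ℕ} {h : Torus d → ℝ} {A B : Set (Measure (Torus d))} {ε : ℝ} (hε : 0 ≤ ε)
    (hA : ∀ μ ∈ A, ∃ ν ∈ B, nhDist h μ ν ≤ ε) (hB : ∀ ν ∈ B, ∃ μ ∈ A, nhDist h μ ν ≤ ε) :
    hausNh h A B ≤ ε := by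
  refine max_le (Real.sSup_le ?_ hε) (Real.sSup_le ?_ hε)
  · rintro _ ⟨μ, hμ, rfl⟩
    obtain ⟨ν, hν, hle⟩ := hA μ hμ
    exact csInf_le_of_le ⟨0, by rintro _ ⟨_, _, rfl⟩; exact Real.sqrt_nonneg _⟩ ⟨ν, hν, rfl⟩ hle
  · rintro _ ⟨ν, hν, rfl⟩
    obtain ⟨μ, hμ, hle⟩ := hB ν hν
    exact csInf_le_of_le ⟨0, by rintro _ ⟨_, _, rfl⟩; exact Real.sqrt_nonneg _⟩ ⟨μ, hμ, rfl⟩ hle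

theorem approximation_set_nonempty_and_hausdorff_bound_general {d : ℕ} (n : ℕ) (L : ℝ≥0)
    (h : Torus d → ℝ) (hLip : LipschitzWith L h)
    (𝓜 : Set (Measure (Torus d))) (h𝓜prob : ∀ μ ∈ 𝓜, IsProbabilityMeasure μ)
    (h𝓜ne : 𝓜.Nonempty) (hn : 2 ^ d ≤ n) :
    (nPointMeasures d n ∩
        { μ | IsProbabilityMeasure μ ∧ ∃ ν ∈ 𝓜, nhDist h μ ν ≤
            (Real.sqrt d / 2 + 1) * (L : ℝ) / ((n : ℝ) ^ ((1 : ℝ) / d) - 1) }).Nonempty ∧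
      hausNh h
        (nPointMeasures d n ∩
          { μ | IsProbabilityMeasure μ ∧ ∃ ν ∈ 𝓜, nhDist h μ ν ≤
              (Real.sqrt d / 2 + 1) * (L : ℝ) / ((n : ℝ) ^ ((1 : ℝ) / d) - 1) }) 𝓜 ≤
        (Real.sqrt d / 2 + 1) * (L : ℝ) / ((n : ℝ) ^ ((1 : ℝ) / d) - 1) := by
  set ε := (Real.sqrt d / 2 + 1) * (L : ℝ) / ((n : ℝ) ^ ((1 : ℝ) / d) - 1)
  set A := nPointMeasures d n ∩ { μ | IsProbabilityMeasure μ ∧ ∃ ν ∈ 𝓜, nhDist h μ ν ≤ ε }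
  have happrox : ∀ ν ∈ 𝓜, ∃ μ ∈ A, nhDist h μ ν ≤ ε := by
    intro ν hν
    have := h𝓜prob ν hν
    obtain ⟨μ, hμ, hprob, hle⟩ := exists_nPointMeasure_nhDist_le_of_two_pow_le hn hLip ν
    exact ⟨μ, ⟨hμ, hprob, ν, hν, hle⟩, hle⟩
  obtain ⟨ν₀, hν₀⟩ := h𝓜ne
  obtain ⟨μ₀, hμ₀, hle₀⟩ := happrox ν₀ hν₀
  exact ⟨⟨μ₀, hμ₀⟩, hausNh_le_of_forall_exists_nhDist_le ((Real.sqrt_nonneg _).trans hle₀)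
    (fun μ ⟨_, _, ν, hν, hle⟩ => ⟨ν, hν, hle⟩) happrox⟩

/-- For `L`-Lipschitz `h` with nonvanishing Fourier coefficients, a
nonempty set `𝓜_N` of probability measures, `n ≥ 2^d` and
`ε = (√d/2 + 1)L/(n^{1/d} − 1)`, the approximation set
`𝓐_n^ε = 𝓜(Ω^n) ∩ 𝓜_N^ε` (with `𝓜_N^ε` the `ε`-enlargement of `𝓜_N` in `N_h`) is
nonempty and satisfies `𝓗_{N_h}(𝓐_n^ε, 𝓜_N) ≤ ε`. -/
theorem approximation_set_nonempty_and_hausdorff_bound {d : ℕ} (n : ℕ) (L : ℝ≥0)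
    (h : Torus d → ℝ) (hcont : Continuous h) (hLip : LipschitzWith L h)
    (hfc : ∀ ξ : Fin d → ℤ, torusFourierCoeff h ξ ≠ 0)
    (𝓜 : Set (Measure (Torus d))) (h𝓜prob : ∀ μ ∈ 𝓜, IsProbabilityMeasure μ)
    (h𝓜ne : 𝓜.Nonempty) (hn : 2 ^ d ≤ n) :
    (nPointMeasures d n ∩
        { μ | IsProbabilityMeasure μ ∧ ∃ ν ∈ 𝓜, nhDist h μ ν ≤
            (Real.sqrt d / 2 + 1) * (L : ℝ) / ((n : ℝ) ^ ((1 : ℝ) / d) - 1) }).Nonempty ∧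
      hausNh h
        (nPointMeasures d n ∩
          { μ | IsProbabilityMeasure μ ∧ ∃ ν ∈ 𝓜, nhDist h μ ν ≤
              (Real.sqrt d / 2 + 1) * (L : ℝ) / ((n : ℝ) ^ ((1 : ℝ) / d) - 1) }) 𝓜 ≤
        (Real.sqrt d / 2 + 1) * (L : ℝ) / ((n : ℝ) ^ ((1 : ℝ) / d) - 1) :=
  approximation_set_nonempty_and_hausdorff_bound_general n L h hLip 𝓜 h𝓜prob h𝓜ne hn
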